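/- arXiv:1301.3707 — 2 statements merged into one kernel-verified Lean document; each statement's English description precedes it below -/
import Mathlib

section
/- Let M(X,S) be the structure monoid of a non-degenerate symmetric solution with Garside element Δ. If a divides Δ and x ∈ X is such that xa does not divide Δ, then there exist y ∈ X and b dividing Δ with a = y·b in M(X,S) and (x,y) a frozen pair. -/
/-- The defining relations of the structure monoid: `x y = g_x(y) f_y(x)`. -/
def structRel {X : Type*} (g f : X → X → X) :
    FreeMonoid X → FreeMonoid X → Prop :=
  fun a b => ∃ x y : X, a = FreeMonoid.of x * FreeMonoid.of y ∧
    b = FreeMonoid.of (g x y) * FreeMonoid.of (f y x)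

/-- `S` acting on the first two components of `X³`. -/
def S12 {X : Type*} (S : X × X → X × X) : X × X × X → X × X × X :=
  fun p => ((S (p.1, p.2.1)).1, (S (p.1, p.2.1)).2, p.2.2)

/-- `S` acting on the last two components of `X³`. -/
def S23 {X : Type*} (S : X × X → X × X) : X × X × X → X × X × X :=
  fun p => (p.1, (S (p.2.1, p.2.2)).1, (S (p.2.1, p.2.2)).2)

/-- The braid relation `S¹²S²³S¹² = S²³S¹²S²³`. -/
def Braided {X : Type*} (S : X × X → X × X) : Prop :=
  S12 S ∘ S23 S ∘ S12 S = S23 S ∘ S12 S ∘ S23 S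

/-!
The structure monoid `M` maps to multisets of letters twisted by self-maps of `X`, via
`x ↦ ({x}, g x)`; this is a homomorphism because `S` is involutive and braided. When the
`g x` are bijective, divisibility in `M` becomes inclusion of multisets, and `Δ` is sent to the
set `X` itself, so the divisors of `Δ` are the elements whose multiset is duplicate-free. The
multiset of `x a` is `x ::ₘ (g x)(multiset of a)`; if it has a repeated letter, that letter is
`x = g x y` for some `y` in the multiset of `a`, which makes `(x, y)` frozen and lets `y` be
split off on the left of `a`.
-/

namespace StructureMonoid

@[ext]
structure Twisted (X : Type*) where
  letters : Multiset X
  twist : X → X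

instance {X : Type*} : Monoid (Twisted X) where
  mul p q := ⟨p.letters + q.letters.map p.twist, p.twist ∘ q.twist⟩
  one := ⟨0, id⟩
  mul_assoc p q r := by
    ext1
    · change p.letters + q.letters.map p.twist + r.letters.map (p.twist ∘ q.twist)
        = p.letters + (q.letters + r.letters.map q.twist).map p.twist
      rw [Multiset.map_add, Multiset.map_map, add_assoc]
    · rfl
  one_mul p := by
    ext1
    · exact (zero_add _).trans (Multiset.map_id _)
    · rfl
  mul_one p := by
    ext1
    · change p.letters + Multiset.map p.twist 0 = p.letters
      rw [Multiset.map_zero, add_zero]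
    · rfl

lemma Twisted.letters_mul {X : Type*} (p q : Twisted X) :
    (p * q).letters = p.letters + q.letters.map p.twist := rfl

lemma Twisted.letters_one {X : Type*} : (1 : Twisted X).letters = 0 := rfl

variable {X : Type*} {g f : X → X → X}

lemma of_mul_of (x y : X) :
    PresentedMonoid.of (structRel g f) x * PresentedMonoid.of (structRel g f) y
      = PresentedMonoid.of (structRel g f) (g x y) *
          PresentedMonoid.of (structRel g f) (f y x) :=
  Quotient.sound (ConGen.Rel.of _ _ ⟨x, y, rfl, rfl⟩)

lemma g_g_f_of_involutive {S : X × X → X × X} (hS : ∀ x y : X, S (x, y) = (g x y, f y x))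
    (hinv : ∀ p : X × X, S (S p) = p) (x y : X) : g (g x y) (f y x) = x := by
  simpa only [hS] using congrArg Prod.fst (hinv (x, y))

lemma g_g_g_of_braided {S : X × X → X × X} (hS : ∀ x y : X, S (x, y) = (g x y, f y x))
    (hbr : Braided S) (p q r : X) : g (g p q) (g (f q p) r) = g p (g q r) := by
  simpa only [Function.comp_apply, S12, S23, hS] using congrArg Prod.fst (congrFun hbr (p, q, r))

lemma frozen_of_g_eq {S : X × X → X × X} (hS : ∀ x y : X, S (x, y) = (g x y, f y x))
    (hinv : ∀ p : X × X, S (S p) = p) {x y : X} (hinj : Function.Injective (g x))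
    (hxy : g x y = x) : S (x, y) = (x, y) := by
  have hfyx : g x (f y x) = g x y := by
    rw [hxy]
    simpa only [hxy] using g_g_f_of_involutive hS hinv x y
  rw [hS, hxy, hinj hfyx]

def twistedHom (g f : X → X → X) (hgf : ∀ x y : X, g (g x y) (f y x) = x)
    (hggg : ∀ p q r : X, g (g p q) (g (f q p) r) = g p (g q r)) :
    PresentedMonoid (structRel g f) →* Twisted X :=
  PresentedMonoid.lift (fun x => ⟨{x}, g x⟩) (by
    rintro a b ⟨x, y, rfl, rfl⟩
    simp only [map_mul, FreeMonoid.lift_eval_of]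
    ext1
    · change {x} + Multiset.map (g x) {y} = {g x y} + Multiset.map (g (g x y)) {f y x}
      rw [Multiset.map_singleton, Multiset.map_singleton, hgf, add_comm]
    · exact funext fun z => (hggg x y z).symm)

section Hom

variable (Λ : PresentedMonoid (structRel g f) →* Twisted X)

lemma letters_of_mul (hΛ : ∀ x : X, Λ (PresentedMonoid.of (structRel g f) x) = ⟨{x}, g x⟩)
    (x : X) (m : PresentedMonoid (structRel g f)) :
    (Λ (PresentedMonoid.of (structRel g f) x * m)).letters
      = x ::ₘ (Λ m).letters.map (g x) := by
  rw [map_mul, Twisted.letters_mul, hΛ, Multiset.singleton_add]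

lemma letters_le_of_dvd {m m' : PresentedMonoid (structRel g f)} (h : m ∣ m') :
    (Λ m).letters ≤ (Λ m').letters := by
  obtain ⟨c, rfl⟩ := h
  rw [map_mul, Twisted.letters_mul]
  exact Multiset.le_add_right _ _

/-- Every letter of `Λ m` can be split off on the left of `m`, thanks to `x y = g x y · f y x`. -/
lemma of_dvd_of_mem_letters
    (hΛ : ∀ x : X, Λ (PresentedMonoid.of (structRel g f) x) = ⟨{x}, g x⟩)
    (m : PresentedMonoid (structRel g f)) {z : X} (hz : z ∈ (Λ m).letters) :
    PresentedMonoid.of (structRel g f) z ∣ m := by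
  induction m using PresentedMonoid.inductionOn generalizing z with
  | h w =>
  induction w using FreeMonoid.recOn generalizing z with
  | one =>
    rw [map_one, map_one, Twisted.letters_one] at hz
    exact absurd hz (Multiset.notMem_zero z)
  | of_mul x w ih =>
    change z ∈ (Λ (PresentedMonoid.of _ x * PresentedMonoid.mk _ w)).letters at hz
    change _ ∣ PresentedMonoid.of _ x * PresentedMonoid.mk _ w
    rw [letters_of_mul Λ hΛ] at hz
    rcases Multiset.mem_cons.mp hz with rfl | hmap
    · exact dvd_mul_right _ _
    · obtain ⟨z₀, hz₀, rfl⟩ := Multiset.mem_map.mp hmap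
      obtain ⟨v, hv⟩ := ih hz₀
      exact ⟨PresentedMonoid.of _ (f z₀ x) * v, by rw [hv, ← mul_assoc, of_mul_of, mul_assoc]⟩

lemma dvd_of_letters_le (hg : ∀ x : X, Function.Injective (g x))
    (hΛ : ∀ x : X, Λ (PresentedMonoid.of (structRel g f) x) = ⟨{x}, g x⟩)
    (m : PresentedMonoid (structRel g f)) {m' : PresentedMonoid (structRel g f)}
    (hle : (Λ m).letters ≤ (Λ m').letters) : m ∣ m' := by
  induction m using PresentedMonoid.inductionOn generalizing m' with
  | h w =>
  induction w using FreeMonoid.recOn generalizing m' with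
  | one => exact one_dvd _
  | of_mul x w ih =>
    change (Λ (PresentedMonoid.of _ x * PresentedMonoid.mk _ w)).letters ≤ _ at hle
    change PresentedMonoid.of _ x * PresentedMonoid.mk _ w ∣ m'
    rw [letters_of_mul Λ hΛ] at hle
    obtain ⟨u, rfl⟩ :=
      of_dvd_of_mem_letters Λ hΛ m' (Multiset.mem_of_le hle (Multiset.mem_cons_self _ _))
    rw [letters_of_mul Λ hΛ, Multiset.cons_le_cons_iff, Multiset.map_le_map_iff (hg x)] at hle
    exact mul_dvd_mul_left _ (ih hle)

lemma exists_letters_eq (hg : ∀ x : X, Function.Surjective (g x))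
    (hΛ : ∀ x : X, Λ (PresentedMonoid.of (structRel g f) x) = ⟨{x}, g x⟩)
    (s : Multiset X) : ∃ m : PresentedMonoid (structRel g f), (Λ m).letters = s := by
  induction hn : Multiset.card s generalizing s with
  | zero => exact ⟨1, by rw [map_one, Twisted.letters_one, Multiset.card_eq_zero.mp hn]⟩
  | succ n ih =>
    obtain ⟨x, hx⟩ := Multiset.card_pos_iff_exists_mem.mp (by omega : 0 < s.card)
    obtain ⟨t, rfl⟩ := Multiset.exists_cons_of_mem hx
    obtain ⟨c, hc⟩ := ih (t.map (Function.surjInv (hg x)))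
      (by simpa only [Multiset.card_map, Multiset.card_cons, add_left_inj] using hn)
    refine ⟨PresentedMonoid.of _ x * c, ?_⟩
    rw [letters_of_mul Λ hΛ, hc, Multiset.map_map,
      (Function.rightInverse_surjInv (hg x)).comp_eq_id, Multiset.map_id]

variable [Fintype X] {Δ : PresentedMonoid (structRel g f)}

lemma letters_garside (hg : ∀ x : X, Function.Bijective (g x))
    (hΛ : ∀ x : X, Λ (PresentedMonoid.of (structRel g f) x) = ⟨{x}, g x⟩)
    (hΔdvd : ∀ x : X, PresentedMonoid.of (structRel g f) x ∣ Δ)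
    (hΔlcm : ∀ m : PresentedMonoid (structRel g f),
      (∀ x : X, PresentedMonoid.of (structRel g f) x ∣ m) → Δ ∣ m) :
    (Λ Δ).letters = Finset.univ.val := by
  obtain ⟨θ, hθ⟩ := exists_letters_eq Λ (fun x => (hg x).2) hΛ Finset.univ.val
  have hΔθ : Δ ∣ θ :=
    hΔlcm θ fun z => of_dvd_of_mem_letters Λ hΛ θ (hθ ▸ Finset.mem_univ_val z)
  refine le_antisymm (hθ ▸ letters_le_of_dvd Λ hΔθ) ?_
  refine (Multiset.le_iff_subset Finset.univ.nodup).2 fun z _ => ?_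
  have hz := letters_le_of_dvd Λ (hΔdvd z)
  rw [hΛ] at hz
  exact Multiset.singleton_le.mp hz

lemma dvd_garside_iff (hg : ∀ x : X, Function.Injective (g x))
    (hΛ : ∀ x : X, Λ (PresentedMonoid.of (structRel g f) x) = ⟨{x}, g x⟩)
    (hΔ : (Λ Δ).letters = Finset.univ.val) (m : PresentedMonoid (structRel g f)) :
    m ∣ Δ ↔ (Λ m).letters.Nodup := by
  refine ⟨fun h => ?_, fun h => dvd_of_letters_le Λ hg hΛ m ?_⟩
  · exact Multiset.nodup_of_le (hΔ ▸ letters_le_of_dvd Λ h) Finset.univ.nodup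
  · exact hΔ ▸ (Multiset.le_iff_subset h).2 fun z _ => Finset.mem_univ_val z

end Hom

end StructureMonoid

open StructureMonoid in
theorem stmt_9_general {X : Type*} [Fintype X]
    (S : X × X → X × X) (g f : X → X → X)
    (hS : ∀ x y : X, S (x, y) = (g x y, f y x))
    (hg : ∀ x : X, Function.Bijective (g x))
    (hinv : ∀ p : X × X, S (S p) = p)
    (hbr : Braided S)
    (Δ : PresentedMonoid (structRel g f))
    (hΔdvd : ∀ x : X, PresentedMonoid.of (structRel g f) x ∣ Δ)
    (hΔlcm : ∀ m : PresentedMonoid (structRel g f),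
      (∀ x : X, PresentedMonoid.of (structRel g f) x ∣ m) → Δ ∣ m)
    (a : PresentedMonoid (structRel g f)) (x : X)
    (ha : a ∣ Δ) (hxa : ¬(PresentedMonoid.of (structRel g f) x * a ∣ Δ)) :
    ∃ (y : X) (b : PresentedMonoid (structRel g f)),
      b ∣ Δ ∧ a = PresentedMonoid.of (structRel g f) y * b ∧ S (x, y) = (x, y) := by
  set Λ := twistedHom g f (g_g_f_of_involutive hS hinv) (g_g_g_of_braided hS hbr)
  have hΛ : ∀ z : X, Λ (PresentedMonoid.of (structRel g f) z) = ⟨{z}, g z⟩ := fun _ => rfl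
  have hinj : ∀ z : X, Function.Injective (g z) := fun z => (hg z).1
  have hdvdΔ := dvd_garside_iff Λ hinj hΛ (letters_garside Λ hg hΛ hΔdvd hΔlcm)
  have haN := (hdvdΔ a).1 ha
  obtain ⟨y, hy, hxy⟩ : ∃ y ∈ (Λ a).letters, g x y = x := by
    by_contra! hfree
    refine hxa ((hdvdΔ _).2 ?_)
    rw [letters_of_mul Λ hΛ, Multiset.nodup_cons]
    refine ⟨fun hmem => ?_, haN.map (hinj x)⟩
    obtain ⟨y, hy, hxy⟩ := Multiset.mem_map.mp hmem
    exact hfree y hy hxy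
  obtain ⟨b, rfl⟩ := of_dvd_of_mem_letters Λ hΛ a hy
  rw [letters_of_mul Λ hΛ, Multiset.nodup_cons] at haN
  exact ⟨y, b, (hdvdΔ b).2 (haN.2.of_map _), rfl, frozen_of_g_eq hS hinv (hinj x) hxy⟩

/-- if `a` divides the Garside element `Δ` of `M(X,S)` and `x ∈ X` is such that
`x·a` does not divide `Δ`, then `a = y·b` for some `y ∈ X` with `(x,y)` a frozen pair and some
`b` dividing `Δ`. -/
theorem stmt_9 {X : Type*} [Fintype X]
    (S : X × X → X × X) (g f : X → X → X)
    (hS : ∀ x y : X, S (x, y) = (g x y, f y x))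
    (hg : ∀ x : X, Function.Bijective (g x))
    (hf : ∀ x : X, Function.Bijective (f x))
    (hinv : ∀ p : X × X, S (S p) = p)
    (hbr : Braided S)
    (Δ : PresentedMonoid (structRel g f))
    (hΔdvd : ∀ x : X, PresentedMonoid.of (structRel g f) x ∣ Δ)
    (hΔlcm : ∀ m : PresentedMonoid (structRel g f),
      (∀ x : X, PresentedMonoid.of (structRel g f) x ∣ m) → Δ ∣ m)
    (a : PresentedMonoid (structRel g f)) (x : X)
    (ha : a ∣ Δ) (hxa : ¬(PresentedMonoid.of (structRel g f) x * a ∣ Δ)) :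
    ∃ (y : X) (b : PresentedMonoid (structRel g f)),
      b ∣ Δ ∧ a = PresentedMonoid.of (structRel g f) y * b ∧ S (x, y) = (x, y) :=
  stmt_9_general S g f hS hg hinv hbr Δ hΔdvd hΔlcm a x ha hxa
end

section
/- Let (X,S) be a non-degenerate symmetric solution with structure monoid M(X,S), Garside element Δ, and signed representation ψ. If a divides Δ, then for every x ∈ X: ψ_a(x) = −φ_a(x) if x right-divides a, and ψ_a(x) = φ_a(x) otherwise. Consequently n(ψ_a) = ℓ(a), and the restriction of ψ to the set of divisors of Δ is injective. -/
/-- The signed permutation matrix `ψ_x` on `V = ℝ^X`: the basis vector `y` is sent to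
`φ_x(y) = f_x⁻¹(y)` when `y ≠ x`, and `x` is sent to `-φ_x(x)`. -/
noncomputable def psiMat {X : Type*} [DecidableEq X] [Nonempty X]
    (f : X → X → X) (x : X) : Matrix X X ℝ :=
  Matrix.of fun z y =>
    if z = Function.invFun (f x) y then (if y = x then (-1 : ℝ) else 1) else 0

/-- `n(ρ) = #{x ∈ X : ρ(x) ∉ X}` : the number of basis vectors whose image under `ρ` is not a
(positive) basis vector. -/
noncomputable def nneg {X : Type*} [DecidableEq X] (ρ : Matrix X X ℝ) : ℕ :=
  Set.ncard {x : X | ∀ z : X, (fun w => ρ w x) ≠ Pi.single z (1 : ℝ)}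



/-!
Send the atom `x` of `M = M(X, S)` to `(φ_x, e_x)` in the wreath product `ℕ ≀ Sym(X)`. The count
vector of the image of `a` records its right divisors (`x` right-divides `a` iff its count at `x`
is positive), it determines `a` (peel off right divisors one at a time), and `ψ` factors through
this map: the column `x` of `ψ_a` is `(-1)^{count_x(a)} φ_a(x)`.

What remains is that every divisor of `Δ` has all counts at most `1`. The left-handed count
of `Δ` (built from `g` instead of `f`) is positive at every atom, since every atom left-divides `Δ`,
and sums to `ℓ(Δ) ≤ |X|`, because the Ore condition produces a common multiple of all atoms of
length `|X|`; so it is identically `1`. Left counts at most `1` force right counts at most `1`: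
a right count `≥ 2` exposes a right factor `u y` with `u = φ_y(y)`, so that `(u, y)` is a fixed
point of `S`, and the left count of `u y` at `u` is `2`.
-/

open Function

/-- The wreath product `ℕ ≀ Sym(X)`. -/
@[ext]
structure NatWreath (X : Type*) where
  perm : Equiv.Perm X
  count : X → ℕ

namespace NatWreath

section Monoid

variable {X : Type*}

instance : Mul (NatWreath X) := ⟨fun a b => ⟨a.perm * b.perm, a.count ∘ b.perm + b.count⟩⟩

instance : One (NatWreath X) := ⟨⟨1, 0⟩⟩

@[simp] theorem perm_mul (a b : NatWreath X) : (a * b).perm = a.perm * b.perm := rfl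

@[simp] theorem count_mul (a b : NatWreath X) (t : X) :
    (a * b).count t = a.count (b.perm t) + b.count t := rfl

@[simp] theorem perm_one : (1 : NatWreath X).perm = 1 := rfl

@[simp] theorem count_one (t : X) : (1 : NatWreath X).count t = 0 := rfl

instance : Monoid (NatWreath X) where
  mul_assoc a b c := by ext t <;> simp [add_assoc]
  one_mul a := by ext t <;> simp
  mul_one a := by ext t <;> simp

def permHom : NatWreath X →* Equiv.Perm X where
  toFun := perm
  map_one' := rfl
  map_mul' _ _ := rfl

theorem le_count_mul_right (a b : NatWreath X) (t : X) : b.count t ≤ (a * b).count t := by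
  simp

theorem le_count_mul_left (a b : NatWreath X) (t : X) :
    a.count t ≤ (a * b).count (b.perm.symm t) := by
  simp

end Monoid

section Atom

variable {X : Type*} [DecidableEq X]

def atom (σ : Equiv.Perm X) (x : X) : NatWreath X := ⟨σ, Pi.single x 1⟩

@[simp] theorem perm_atom (σ : Equiv.Perm X) (x : X) : (atom σ x).perm = σ := rfl

@[simp] theorem count_atom (σ : Equiv.Perm X) (x : X) : (atom σ x).count = Pi.single x 1 := rfl

theorem atom_mul_atom_eq {σ τ σ' τ' : Equiv.Perm X} {x y x' y' : X}
    (hperm : σ * τ = σ' * τ') (h : τ.symm x = y') (h' : τ'.symm x' = y) :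
    atom σ x * atom τ y = atom σ' x' * atom τ' y' := by
  ext t
  · simp [hperm]
  · have hsingle (ν : Equiv.Perm X) (z : X) :
        (Pi.single z 1 : X → ℕ) (ν t) = (Pi.single (ν.symm z) 1 : X → ℕ) t :=
      congrFun (Pi.single_comp_equiv ν z (1 : ℕ)) t
    simp only [count_mul, count_atom, perm_atom, hsingle, h, h']
    exact add_comm _ _

end Atom

section Total

variable {X : Type*} [Fintype X]

def total (a : NatWreath X) : ℕ := ∑ t, a.count t

theorem total_one : (1 : NatWreath X).total = 0 := by simp [total]

theorem total_mul (a b : NatWreath X) : (a * b).total = a.total + b.total := by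
  simp only [total, count_mul, Finset.sum_add_distrib, Equiv.sum_comp b.perm a.count]

theorem total_atom [DecidableEq X] (σ : Equiv.Perm X) (x : X) : (atom σ x).total = 1 :=
  Fintype.sum_pi_single' x 1

end Total

theorem neg_single_ne_single {X : Type*} [DecidableEq X] (p z : X) :
    -(Pi.single p 1 : X → ℝ) ≠ Pi.single z 1 := by
  intro h
  have hp := congrFun h p
  rw [Pi.neg_apply, Pi.single_eq_same, Pi.single_apply] at hp
  split_ifs at hp <;> norm_num at hp

section SignedMatrix

variable {X : Type*} [Fintype X] [DecidableEq X]

def toSignedMatrix (R : Type*) [CommRing R] : NatWreath X →* Matrix X X R where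
  toFun a := Matrix.of fun w x => ((-1 : R) ^ a.count x • Pi.single (a.perm x) (1 : R)) w
  map_one' := by
    ext w x
    simp [Matrix.one_apply, Pi.single_apply]
  map_mul' a b := by
    ext w x
    simp only [Matrix.mul_apply, Matrix.of_apply, Pi.smul_apply, smul_eq_mul, Pi.single_apply,
      mul_ite, mul_one, mul_zero, Finset.sum_ite_eq', Finset.mem_univ, if_true, perm_mul,
      count_mul, Equiv.Perm.mul_apply, pow_add]
    split_ifs <;> ring

theorem toSignedMatrix_col (R : Type*) [CommRing R] (a : NatWreath X) (x : X) :
    (fun w => toSignedMatrix R a w x) = (-1 : R) ^ a.count x • Pi.single (a.perm x) 1 :=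
  rfl

theorem toSignedMatrix_col_of_count_eq_zero {a : NatWreath X} {x : X} (h : a.count x = 0) :
    (fun w => toSignedMatrix ℝ a w x) = Pi.single (a.perm x) 1 := by
  rw [toSignedMatrix_col, h, pow_zero, one_smul]

theorem toSignedMatrix_col_of_count_eq_one {a : NatWreath X} {x : X} (h : a.count x = 1) :
    (fun w => toSignedMatrix ℝ a w x) = -Pi.single (a.perm x) 1 := by
  rw [toSignedMatrix_col, h, pow_one, neg_one_smul]

theorem nneg_toSignedMatrix {a : NatWreath X} (ha : ∀ t, a.count t ≤ 1) :
    nneg (toSignedMatrix ℝ a) = a.total := by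
  have hset : {x | ∀ z, (fun w => toSignedMatrix ℝ a w x) ≠ Pi.single z 1}
      = (Finset.univ.filter fun x => a.count x = 1 : Set X) := by
    ext x
    simp only [Set.mem_ofPred_eq, Finset.coe_filter, Finset.mem_univ, true_and]
    rcases Nat.le_one_iff_eq_zero_or_eq_one.mp (ha x) with h | h
    · simp only [toSignedMatrix_col_of_count_eq_zero h, h, zero_ne_one, iff_false, not_forall,
        not_not]
      exact ⟨_, rfl⟩
    · simp only [toSignedMatrix_col_of_count_eq_one h, h, iff_true]
      exact fun z => neg_single_ne_single _ z
  rw [nneg, hset, Set.ncard_coe_finset, Finset.card_filter, total]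
  refine Finset.sum_congr rfl fun t _ => ?_
  rcases Nat.le_one_iff_eq_zero_or_eq_one.mp (ha t) with h | h <;> simp [h]

theorem count_eq_of_toSignedMatrix_eq {a b : NatWreath X} (ha : ∀ t, a.count t ≤ 1)
    (hb : ∀ t, b.count t ≤ 1) (h : toSignedMatrix ℝ a = toSignedMatrix ℝ b) :
    a.count = b.count := by
  funext x
  have hcol : (fun w => toSignedMatrix ℝ a w x) = fun w => toSignedMatrix ℝ b w x := by rw [h]
  rcases Nat.le_one_iff_eq_zero_or_eq_one.mp (ha x) with ha' | ha' <;>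
    rcases Nat.le_one_iff_eq_zero_or_eq_one.mp (hb x) with hb' | hb'
  · rw [ha', hb']
  · rw [toSignedMatrix_col_of_count_eq_zero ha', toSignedMatrix_col_of_count_eq_one hb'] at hcol
    exact absurd hcol.symm (neg_single_ne_single _ _)
  · rw [toSignedMatrix_col_of_count_eq_one ha', toSignedMatrix_col_of_count_eq_zero hb'] at hcol
    exact absurd hcol (neg_single_ne_single _ _)
  · rw [ha', hb']

end SignedMatrix

end NatWreath

theorem Fintype.le_one_of_one_le_of_sum_le_card {X : Type*} [Fintype X] {v : X → ℕ}
    (h : ∀ t, 1 ≤ v t) (hsum : ∑ t, v t ≤ Fintype.card X) (t : X) : v t ≤ 1 := by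
  by_contra! ht
  have hlt : ∑ _t : X, 1 < ∑ t, v t := Finset.sum_lt_sum (fun s _ => h s) ⟨t, Finset.mem_univ t, ht⟩
  simp only [Finset.sum_const, Finset.card_univ, smul_eq_mul, mul_one] at hlt
  omega

@[elab_as_elim]
theorem PresentedMonoid.induction_right {α : Type*} {rels : FreeMonoid α → FreeMonoid α → Prop}
    {motive : PresentedMonoid rels → Prop} (a : PresentedMonoid rels) (one : motive 1)
    (mul_of : ∀ a x, motive a → motive (a * of rels x)) : motive a :=
  Submonoid.induction_of_closure_eq_top_right (closure_range_of rels) a one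
    (by rintro a _ ⟨x, rfl⟩ ha; exact mul_of a x ha)

@[elab_as_elim]
theorem PresentedMonoid.induction_left {α : Type*} {rels : FreeMonoid α → FreeMonoid α → Prop}
    {motive : PresentedMonoid rels → Prop} (a : PresentedMonoid rels) (one : motive 1)
    (of_mul : ∀ x a, motive a → motive (of rels x * a)) : motive a :=
  Submonoid.induction_of_closure_eq_top_left (closure_range_of rels) a one
    (by rintro _ ⟨x, rfl⟩ a ha; exact of_mul x a ha)

section StructureMonoid

variable {X : Type*} {g f : X → X → X}

local notation "𝓜" => PresentedMonoid (structRel g f)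
local notation "ι" => PresentedMonoid.of (structRel g f)

theorem of_mul_of_structRel (x y : X) : ι x * ι y = ι (g x y) * ι (f y x) :=
  PresentedMonoid.mk_eq_mk_of_rel ⟨x, y, rfl, rfl⟩

theorem exists_mul_of_eq_of_mul (hg : ∀ x, Surjective (g x)) (a : 𝓜) (z : X) :
    ∃ y c, a * ι y = ι z * c := by
  induction a using PresentedMonoid.induction_left generalizing z with
  | one => exact ⟨z, 1, by rw [one_mul, mul_one]⟩
  | of_mul x a ih =>
    obtain ⟨z', hz'⟩ := hg z x
    obtain ⟨y, c, hc⟩ := ih (f z' z)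
    refine ⟨y, ι z' * c, ?_⟩
    rw [mul_assoc, hc, ← mul_assoc, ← hz', ← of_mul_of_structRel, mul_assoc]

end StructureMonoid

/-- A non-degenerate involutive braided solution `S(x, y) = (g_x(y), f_y(x))`, written out in
terms of `g` and `f`. -/
structure IsSymmetricSolution {X : Type*} (g f : X → X → X) : Prop where
  bijective_g : ∀ x, Bijective (g x)
  bijective_f : ∀ x, Bijective (f x)
  g_g_f : ∀ x y, g (g x y) (f y x) = x
  f_f_g : ∀ x y, f (f y x) (g x y) = y
  g_g : ∀ x y z, g x (g y z) = g (g x y) (g (f y x) z)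
  f_f : ∀ x y z, f y (f x z) = f (f y x) (f (g x y) z)

namespace IsSymmetricSolution

open NatWreath

variable {X : Type*} {g f : X → X → X}

theorem of_braided {S : X × X → X × X} (hS : ∀ x y, S (x, y) = (g x y, f y x))
    (hg : ∀ x, Bijective (g x)) (hf : ∀ x, Bijective (f x)) (hinv : ∀ p, S (S p) = p)
    (hbr : Braided S) : IsSymmetricSolution g f where
  bijective_g := hg
  bijective_f := hf
  g_g_f x y := by simpa [hS] using congrArg Prod.fst (hinv (x, y))
  f_f_g x y := by simpa [hS] using congrArg Prod.snd (hinv (x, y))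
  g_g x y z := by
    have h := congrFun hbr (x, y, z)
    simp only [Function.comp_apply, S12, S23, hS] at h
    exact (congrArg Prod.fst h).symm
  f_f x y z := by
    have h := congrFun hbr (z, x, y)
    simp only [Function.comp_apply, S12, S23, hS] at h
    exact congrArg (·.2.2) h

variable (hX : IsSymmetricSolution g f)
include hX

noncomputable def phi (y : X) : Equiv.Perm X :=
  (Equiv.ofBijective (f y) (hX.bijective_f y)).symm

noncomputable def gPerm (x : X) : Equiv.Perm X :=
  Equiv.ofBijective (g x) (hX.bijective_g x)

@[simp] theorem gPerm_apply (x t : X) : hX.gPerm x t = g x t := rfl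

theorem f_phi (y t : X) : f y (hX.phi y t) = t :=
  (hX.phi y).symm_apply_apply t

theorem phi_mul_phi (x y : X) : hX.phi x * hX.phi y = hX.phi (g x y) * hX.phi (f y x) := by
  rw [← inv_inj, mul_inv_rev, mul_inv_rev]
  ext s
  exact hX.f_f x y s

theorem gPerm_mul_gPerm (x y : X) :
    hX.gPerm x * hX.gPerm y = hX.gPerm (g x y) * hX.gPerm (f y x) := by
  ext s
  exact hX.g_g x y s

/-- Together with `f_y(φ_y(y)) = y`, this says that `(φ_y(y), y)` is a fixed point of `S`. -/
theorem g_phi_self (y : X) : g (hX.phi y y) y = hX.phi y y := by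
  apply (hX.bijective_f y).injective
  have h := hX.f_f_g (hX.phi y y) y
  rw [hX.f_phi] at h ⊢
  exact h

theorem psiMat_eq_toSignedMatrix [Fintype X] [DecidableEq X] [Nonempty X] (x : X) :
    psiMat f x = toSignedMatrix ℝ (atom (hX.phi x) x) := by
  have hinv (y : X) : invFun (f x) y = hX.phi x y := by
    conv_lhs => rw [← hX.f_phi x y]
    exact leftInverse_invFun (hX.bijective_f x).injective _
  ext z y
  by_cases hy : y = x <;> simp [psiMat, toSignedMatrix, Pi.single_apply, hinv, hy]

variable [DecidableEq X]

local notation "𝓜" => PresentedMonoid (structRel g f)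
local notation "ι" => PresentedMonoid.of (structRel g f)

noncomputable def wreathRight : 𝓜 →* NatWreath X :=
  PresentedMonoid.lift (fun x => atom (hX.phi x) x) <| by
    rintro _ _ ⟨x, y, rfl, rfl⟩
    simp only [map_mul, FreeMonoid.lift_eval_of]
    exact atom_mul_atom_eq (hX.phi_mul_phi x y) rfl (hX.f_f_g x y)

noncomputable def wreathLeft : 𝓜 →* (NatWreath X)ᵐᵒᵖ :=
  PresentedMonoid.lift (fun x => .op (atom (hX.gPerm x)⁻¹ x)) <| by
    rintro _ _ ⟨x, y, rfl, rfl⟩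
    simp only [map_mul, FreeMonoid.lift_eval_of, ← MulOpposite.op_mul]
    refine congrArg _ (atom_mul_atom_eq ?_ rfl (hX.g_g_f x y))
    rw [← mul_inv_rev, hX.gPerm_mul_gPerm, mul_inv_rev]

@[simp] theorem wreathRight_of (x : X) : hX.wreathRight (ι x) = atom (hX.phi x) x := rfl

@[simp] theorem wreathLeft_of (x : X) : (hX.wreathLeft (ι x)).unop = atom (hX.gPerm x)⁻¹ x := rfl

theorem count_wreathRight_mul_of (a : 𝓜) (y t : X) :
    (hX.wreathRight (a * ι y)).count t
      = (hX.wreathRight a).count (hX.phi y t) + (Pi.single y 1 : X → ℕ) t := by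
  rw [map_mul, count_mul]
  rfl

theorem one_le_count_wreathRight_iff {a : 𝓜} {x : X} :
    1 ≤ (hX.wreathRight a).count x ↔ ∃ b, a = b * ι x := by
  refine ⟨fun h => ?_, ?_⟩
  · induction a using PresentedMonoid.induction_right generalizing x with
    | one => simp at h
    | mul_of a y ih =>
      rw [count_wreathRight_mul_of] at h
      by_cases hxy : x = y
      · exact ⟨a, by rw [hxy]⟩
      · obtain ⟨b, rfl⟩ := ih (by simpa [hxy] using h)
        refine ⟨b * ι (g (hX.phi y x) y), ?_⟩
        rw [mul_assoc, mul_assoc, of_mul_of_structRel, hX.f_phi]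
  · rintro ⟨b, rfl⟩
    rw [count_wreathRight_mul_of]
    simp

theorem count_wreathRight_injective : Injective fun a : 𝓜 => (hX.wreathRight a).count := by
  intro a b (h : (hX.wreathRight a).count = (hX.wreathRight b).count)
  induction a using PresentedMonoid.induction_right generalizing b with
  | one =>
    induction b using PresentedMonoid.induction_right with
    | one => rfl
    | mul_of b y _ =>
      have hy := congrFun h y
      rw [count_wreathRight_mul_of] at hy
      simp at hy
  | mul_of a y ih =>
    have hy : 1 ≤ (hX.wreathRight b).count y := by
      rw [← h]
      exact hX.one_le_count_wreathRight_iff.mpr ⟨a, rfl⟩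
    obtain ⟨b, rfl⟩ := hX.one_le_count_wreathRight_iff.mp hy
    rw [ih (funext fun t => ?_)]
    have ht := congrFun h ((hX.phi y).symm t)
    simp only [count_wreathRight_mul_of, Equiv.apply_symm_apply] at ht
    omega

theorem one_le_count_wreathLeft_of_dvd {a : 𝓜} {z : X} (h : ι z ∣ a) :
    1 ≤ (hX.wreathLeft a).unop.count z := by
  obtain ⟨c, rfl⟩ := h
  rw [map_mul, MulOpposite.unop_mul]
  exact le_trans (by simp) (le_count_mul_right _ _ z)

theorem exists_two_le_count_wreathLeft (d : 𝓜) (y : X) :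
    ∃ s, 2 ≤ (hX.wreathLeft (d * ι (hX.phi y y) * ι y)).unop.count s := by
  have hy : (hX.gPerm (hX.phi y y))⁻¹ (hX.phi y y) = y := by
    rw [Equiv.Perm.inv_eq_iff_eq, gPerm_apply, hX.g_phi_self]
  refine ⟨(hX.wreathLeft d).unop.perm.symm (hX.phi y y), ?_⟩
  rw [mul_assoc, map_mul, MulOpposite.unop_mul]
  refine le_trans ?_ (le_count_mul_left _ _ _)
  simp [hy]

theorem count_wreathRight_le_one {a : 𝓜} (ha : ∀ t, (hX.wreathLeft a).unop.count t ≤ 1)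
    (t : X) : (hX.wreathRight a).count t ≤ 1 := by
  induction a using PresentedMonoid.induction_right generalizing t with
  | one => simp
  | mul_of a y ih =>
    have hle (s : X) :
        (hX.wreathLeft a).unop.count s ≤ (hX.wreathLeft (a * ι y)).unop.count s := by
      rw [map_mul, MulOpposite.unop_mul]
      exact le_count_mul_right _ _ s
    have ih' := ih fun s => (hle s).trans (ha s)
    rw [count_wreathRight_mul_of]
    by_cases hty : t = y
    · subst hty
      suffices (hX.wreathRight a).count (hX.phi t t) = 0 by simp [this]
      by_contra h0
      obtain ⟨d, rfl⟩ := hX.one_le_count_wreathRight_iff.mp (Nat.one_le_iff_ne_zero.mpr h0)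
      obtain ⟨s, hs⟩ := hX.exists_two_le_count_wreathLeft d t
      have := ha s
      omega
    · simpa [hty] using ih' (hX.phi y t)

variable [Fintype X]

theorem total_wreathRight_mk (w : FreeMonoid X) :
    (hX.wreathRight (PresentedMonoid.mk _ w)).total = w.length := by
  induction w using FreeMonoid.inductionOn' with
  | one => exact total_one
  | of_mul x w ih =>
    rw [map_mul, map_mul, total_mul, ih, FreeMonoid.length_mul, FreeMonoid.length_of]
    exact congrArg (· + w.length) (total_atom _ x)

theorem total_wreathLeft (a : 𝓜) : (hX.wreathLeft a).unop.total = (hX.wreathRight a).total := by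
  induction a using PresentedMonoid.induction_right with
  | one => rfl
  | mul_of a y ih =>
    rw [map_mul, map_mul, MulOpposite.unop_mul, total_mul, total_mul, ih, wreathLeft_of,
      wreathRight_of, total_atom, total_atom, add_comm]

theorem exists_common_multiple (s : Finset X) :
    ∃ m : 𝓜, (hX.wreathRight m).total = s.card ∧ ∀ z ∈ s, ι z ∣ m := by
  induction s using Finset.induction_on with
  | empty => exact ⟨1, total_one, by simp⟩
  | insert z s hz ih =>
    obtain ⟨m, hm, hdvd⟩ := ih
    obtain ⟨y, c, hc⟩ := exists_mul_of_eq_of_mul (fun x => (hX.bijective_g x).surjective) m z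
    refine ⟨m * ι y, ?_, fun z' hz' => ?_⟩
    · rw [map_mul, total_mul, hm, wreathRight_of, total_atom, Finset.card_insert_of_notMem hz]
    · rcases Finset.mem_insert.mp hz' with rfl | h
      · exact ⟨c, hc⟩
      · exact (hdvd z' h).mul_right _

theorem count_wreathLeft_garside_le_one {Δ : 𝓜} (hΔdvd : ∀ x, ι x ∣ Δ)
    (hΔlcm : ∀ m, (∀ x, ι x ∣ m) → Δ ∣ m) (t : X) : (hX.wreathLeft Δ).unop.count t ≤ 1 := by
  refine Fintype.le_one_of_one_le_of_sum_le_card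
    (fun x => hX.one_le_count_wreathLeft_of_dvd (hΔdvd x)) ?_ t
  obtain ⟨m, hm, hdvd⟩ := hX.exists_common_multiple Finset.univ
  obtain ⟨c, rfl⟩ := hΔlcm m fun x => hdvd x (Finset.mem_univ x)
  rw [map_mul, total_mul, Finset.card_univ] at hm
  have := hX.total_wreathLeft Δ
  rw [total] at this
  omega

theorem count_wreathRight_le_one_of_dvd_garside {Δ : 𝓜} (hΔdvd : ∀ x, ι x ∣ Δ)
    (hΔlcm : ∀ m, (∀ x, ι x ∣ m) → Δ ∣ m) {a : 𝓜} (ha : a ∣ Δ) (t : X) :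
    (hX.wreathRight a).count t ≤ 1 := by
  obtain ⟨c, rfl⟩ := ha
  calc (hX.wreathRight a).count t
      ≤ (hX.wreathRight (a * c)).count ((hX.wreathRight c).perm.symm t) := by
        rw [map_mul]
        exact le_count_mul_left _ _ _
    _ ≤ 1 := hX.count_wreathRight_le_one (hX.count_wreathLeft_garside_le_one hΔdvd hΔlcm) _

end IsSymmetricSolution

open scoped Classical in
/-- if `a` divides the Garside element `Δ`, then for every `x ∈ X` the column of
`ψ_a` at `x` is `-φ_a(x)` if `x` right-divides `a` and `φ_a(x)` otherwise; consequently
`n(ψ_a) = ℓ(a)`, and `ψ` is injective on the set of divisors of `Δ`. -/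
theorem stmt_12 {X : Type*} [Fintype X] [DecidableEq X] [Nonempty X]
    (S : X × X → X × X) (g f : X → X → X)
    (hS : ∀ x y : X, S (x, y) = (g x y, f y x))
    (hg : ∀ x : X, Function.Bijective (g x))
    (hf : ∀ x : X, Function.Bijective (f x))
    (hinv : ∀ p : X × X, S (S p) = p)
    (hbr : Braided S)
    (Δ : PresentedMonoid (structRel g f))
    (hΔdvd : ∀ x : X, PresentedMonoid.of (structRel g f) x ∣ Δ)
    (hΔlcm : ∀ m : PresentedMonoid (structRel g f),
      (∀ x : X, PresentedMonoid.of (structRel g f) x ∣ m) → Δ ∣ m)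
    (Φ : PresentedMonoid (structRel g f) →* Equiv.Perm X)
    (hΦ : ∀ x : X, Φ (PresentedMonoid.of (structRel g f) x)
      = (Equiv.ofBijective (f x) (hf x)).symm)
    (Ψ : PresentedMonoid (structRel g f) →* Matrix X X ℝ)
    (hΨ : ∀ x : X, Ψ (PresentedMonoid.of (structRel g f) x) = psiMat f x) :
    (∀ a : PresentedMonoid (structRel g f), a ∣ Δ →
        (∀ x : X, (fun w => Ψ a w x) =
          (if ∃ b, a = b * PresentedMonoid.of (structRel g f) x then
            -(Pi.single (Φ a x) (1 : ℝ)) else Pi.single (Φ a x) (1 : ℝ))) ∧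
        ∀ w : FreeMonoid X, PresentedMonoid.mk (structRel g f) w = a →
          nneg (Ψ a) = w.length) ∧
      ∀ a b : PresentedMonoid (structRel g f), a ∣ Δ → b ∣ Δ → Ψ a = Ψ b → a = b := by
  have hX := IsSymmetricSolution.of_braided hS hg hf hinv hbr
  have hΦρ (a) : Φ a = (hX.wreathRight a).perm :=
    DFunLike.congr_fun (PresentedMonoid.ext (ψ := NatWreath.permHom.comp hX.wreathRight) _ hΦ) a
  have hΨρ (a) : Ψ a = NatWreath.toSignedMatrix ℝ (hX.wreathRight a) :=
    DFunLike.congr_fun (PresentedMonoid.ext (ψ := (NatWreath.toSignedMatrix ℝ).comp hX.wreathRight)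
      _ fun x => (hΨ x).trans (hX.psiMat_eq_toSignedMatrix x)) a
  have hsimple {a} (ha : a ∣ Δ) := hX.count_wreathRight_le_one_of_dvd_garside hΔdvd hΔlcm ha
  refine ⟨fun a ha => ⟨fun x => ?_, fun w hw => ?_⟩, fun a b ha hb hab => ?_⟩
  · rw [hΨρ, hΦρ]
    split_ifs with hx
    · exact NatWreath.toSignedMatrix_col_of_count_eq_one
        (le_antisymm (hsimple ha x) (hX.one_le_count_wreathRight_iff.mpr hx))
    · exact NatWreath.toSignedMatrix_col_of_count_eq_zero
        (Nat.lt_one_iff.mp (not_le.mp (mt hX.one_le_count_wreathRight_iff.mp hx)))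
  · rw [hΨρ, NatWreath.nneg_toSignedMatrix (hsimple ha), ← hw, hX.total_wreathRight_mk]
  · rw [hΨρ, hΨρ] at hab
    exact hX.count_wreathRight_injective
      (NatWreath.count_eq_of_toSignedMatrix_eq (hsimple ha) (hsimple hb) hab)
end
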